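/- A simple ring R such that R_R is automorphism-invariant is right self-injective. -/

import Mathlib

universe u v w

section Defs

variable {R : Type u} [Ring R]

/-- `N` is an essential submodule of `M`. -/
def EssentialSub {M : Type v} [AddCommGroup M] [Module R M] (N : Submodule R M) : Prop :=
  ∀ K : Submodule R M, K ⊓ N = ⊥ → K = ⊥

/-- `N` is essential in `P` (both submodules of `M`, `N ≤ P`). -/
def EssentialIn {M : Type v} [AddCommGroup M] [Module R M] (N P : Submodule R M) : Prop :=
  N ≤ P ∧ ∀ K : Submodule R M, K ≤ P → K ⊓ N = ⊥ → K = ⊥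

/-- `N` is a closed submodule of `M`: it has no proper essential extension in `M`. -/
def ClosedSub {M : Type v} [AddCommGroup M] [Module R M] (N : Submodule R M) : Prop :=
  ∀ P : Submodule R M, EssentialIn N P → N = P

/-- `i : M →ₗ[R] E` realizes `E` as an injective hull of `M`. -/
structure IsInjectiveHull {M : Type v} {E : Type w} [AddCommGroup M] [Module R M]
    [AddCommGroup E] [Module R E] (i : M →ₗ[R] E) : Prop where
  inj : Function.Injective i
  injE : Module.Injective R E
  ess : EssentialSub (LinearMap.range i)

/-- `M` is invariant under every automorphism of the hull `E` given by `i`. -/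
def HullAutInv {M : Type v} {E : Type w} [AddCommGroup M] [Module R M]
    [AddCommGroup E] [Module R E] (i : M →ₗ[R] E) : Prop :=
  ∀ g : E ≃ₗ[R] E, ∀ m : M, g (i m) ∈ LinearMap.range i

end Defs

/-- `M` is automorphism-invariant: invariant under all automorphisms of its injective hull. -/
def AutInvariant (R : Type u) [Ring R] (M : Type v) [AddCommGroup M] [Module R M] : Prop :=
  ∀ (E : Type v) [AddCommGroup E] [Module R E] (i : M →ₗ[R] E),
    IsInjectiveHull i → HullAutInv i

/-- Every monomorphism from a submodule of `M` into `M` extends to an endomorphism of `M`. -/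
def PseudoInjective (R : Type u) [Ring R] (M : Type v) [AddCommGroup M] [Module R M] : Prop :=
  ∀ (A : Submodule R M) (f : A →ₗ[R] M), Function.Injective f →
    ∃ g : M →ₗ[R] M, ∀ a : A, g a = f a

/-- Every homomorphism from a submodule of `M` into `M` extends to an endomorphism of `M`. -/
def QuasiInjective (R : Type u) [Ring R] (M : Type v) [AddCommGroup M] [Module R M] : Prop :=
  ∀ (A : Submodule R M) (f : A →ₗ[R] M), ∃ g : M →ₗ[R] M, ∀ a : A, g a = f a

/-- `X` is `Y`-injective. -/
def RelInjective (R : Type u) [Ring R] (X : Type v) (Y : Type w) [AddCommGroup X] [Module R X]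
    [AddCommGroup Y] [Module R Y] : Prop :=
  ∀ (A : Submodule R Y) (f : A →ₗ[R] X), ∃ g : Y →ₗ[R] X, ∀ a : A, g a = f a

/-- `M` contains no direct sum of two nonzero isomorphic submodules. -/
def SquareFreeMod (R : Type u) [Ring R] (M : Type v) [AddCommGroup M] [Module R M] : Prop :=
  ∀ (A B : Submodule R M), A ⊓ B = ⊥ → Nonempty (A ≃ₗ[R] B) → A = ⊥

/-- `X` and `Y` have no nonzero isomorphic submodules. -/
def OrthogonalMod (R : Type u) [Ring R] (X : Type v) (Y : Type w) [AddCommGroup X] [Module R X]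
    [AddCommGroup Y] [Module R Y] : Prop :=
  ∀ (A : Submodule R X) (B : Submodule R Y), Nonempty (A ≃ₗ[R] B) → A = ⊥

/-- No nonzero element of `M` is annihilated by an essential (right) ideal of `R`. -/
def NonsingularMod (R : Type u) [Ring R] (M : Type v) [AddCommGroup M] [Module R M] : Prop :=
  ∀ m : M, EssentialSub (LinearMap.ker (LinearMap.toSpanSingleton R M m)) → m = 0

/-!
Let `C` be an injective hull of `R_R` and `S = End(C)`. A simple ring has zero right singular
ideal, so `C` is nonsingular: an endomorphism of `C` vanishing on an essential submodule vanishes,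
hence is determined by its value at `1`. Consequently left multiplication extends to a ring map
`R → S`, through which simplicity passes from `R` to `S`.

Automorphism-invariance says that the subring `T` of endomorphisms preserving `R` contains the
units of `S`, hence every square-zero `x` (as `1 + x` is a unit). If `S` has an idempotent
`e ≠ 0, 1`, split each element into its four Peirce corners: the off-diagonal ones are square-zero,
and `e S e ⊆ T` because the `y` with `e S y S e ⊆ T` form a two-sided ideal of `S` containing
`1 - e`. Otherwise kernels of endomorphisms, being closed submodules of the injective module `C`,
are direct summands, hence `0` or `C`; so `S` is a division ring and again `T = S`. Finally `T = S`
turns every map from a right ideal into `R` into a left multiplication, which is Baer's criterion.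
-/

section Essential

variable {A : Type*} [Ring A] {M M' : Type*} [AddCommGroup M] [Module A M]
  [AddCommGroup M'] [Module A M']

lemma EssentialIn.exists_smul_mem {N P : Submodule A M} (h : EssentialIn N P) {x : M}
    (hxP : x ∈ P) (hx : x ≠ 0) : ∃ a : A, a • x ∈ N ∧ a • x ≠ 0 := by
  have hspan : Submodule.span A {x} ⊓ N ≠ ⊥ := fun hbot =>
    hx <| Submodule.span_singleton_eq_bot.1 <|
      h.2 _ ((Submodule.span_singleton_le_iff_mem _ _).2 hxP) hbot
  obtain ⟨y, ⟨hyx, hyN⟩, hy0⟩ := (Submodule.ne_bot_iff _).1 hspan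
  obtain ⟨a, rfl⟩ := Submodule.mem_span_singleton.1 hyx
  exact ⟨a, hyN, hy0⟩

lemma EssentialSub.essentialIn_top {N : Submodule A M} (h : EssentialSub N) : EssentialIn N ⊤ :=
  ⟨le_top, fun K _ hK => h K hK⟩

lemma essentialSub_of_forall_exists_smul_mem {N : Submodule A M}
    (h : ∀ x : M, x ≠ 0 → ∃ a : A, a • x ∈ N ∧ a • x ≠ 0) : EssentialSub N := by
  refine fun K hK => (Submodule.eq_bot_iff K).2 fun x hxK => by_contra fun hx => ?_
  obtain ⟨a, haN, ha0⟩ := h x hx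
  exact ha0 ((Submodule.mem_bot A).1 (hK ▸ ⟨K.smul_mem a hxK, haN⟩))

lemma EssentialSub.mono {N N' : Submodule A M} (h : EssentialSub N) (hle : N ≤ N') :
    EssentialSub N' :=
  fun K hK => h K (eq_bot_iff.2 (hK ▸ inf_le_inf_left K hle))

lemma EssentialSub.inf {N N' : Submodule A M} (h : EssentialSub N) (h' : EssentialSub N') :
    EssentialSub (N ⊓ N') :=
  fun K hK => h K (h' _ (by rwa [inf_assoc]))

lemma EssentialIn.trans {N P Q : Submodule A M} (hNP : EssentialIn N P) (hPQ : EssentialIn P Q) :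
    EssentialIn N Q :=
  ⟨hNP.1.trans hPQ.1, fun K hKQ hKN => hPQ.2 K hKQ <|
    hNP.2 _ inf_le_right (eq_bot_iff.2 (hKN ▸ inf_le_inf_right N inf_le_left))⟩

lemma EssentialIn.essentialSub_comap {N P : Submodule A M} (h : EssentialIn N P)
    (f : M' →ₗ[A] M) (hf : ∀ x, f x ∈ P) : EssentialSub (N.comap f) := by
  refine essentialSub_of_forall_exists_smul_mem fun x hx => ?_
  by_cases hfx : f x = 0
  · exact ⟨1, by simp [hfx], by simpa using hx⟩
  · obtain ⟨a, haN, ha0⟩ := h.exists_smul_mem (hf x) hfx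
    exact ⟨a, by simpa using haN, fun h0 => ha0 (by rw [← map_smul, h0, map_zero])⟩

lemma EssentialSub.essentialIn_map {N : Submodule A M} (h : EssentialSub N) {f : M →ₗ[A] M'}
    (hf : Function.Injective f) : EssentialIn (N.map f) (LinearMap.range f) := by
  refine ⟨LinearMap.map_le_range, fun L hL hLN => ?_⟩
  have hcomap : L.comap f ⊓ N = ⊥ := by
    apply Submodule.map_injective_of_injective hf
    rw [Submodule.map_inf f hf, Submodule.map_comap_eq_of_le hL, hLN, Submodule.map_bot]
  rw [← Submodule.map_comap_eq_of_le hL, h _ hcomap, Submodule.map_bot]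

lemma exists_maximal_essentialIn (N : Submodule A M) : ∃ P, Maximal (EssentialIn N) P := by
  have hchain : ∀ c ⊆ {P | EssentialIn N P}, IsChain (· ≤ ·) c → ∀ y ∈ c,
      EssentialIn N (sSup c) := by
    refine fun c hc hchain y hy => ⟨(hc hy).1.trans (le_sSup hy), fun K hK hKN => ?_⟩
    rw [← inf_eq_left.2 hK, hchain.directedOn.inf_sSup_eq, iSup₂_eq_bot]
    exact fun P hP => (hc hP).2 _ inf_le_right
      (eq_bot_iff.2 (hKN ▸ inf_le_inf_right N inf_le_left))
  obtain ⟨P, -, hP⟩ := zorn_le_nonempty₀ {P | EssentialIn N P}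
    (fun c hc hc' y hy => ⟨sSup c, hchain c hc hc' y hy, fun _ => le_sSup⟩)
    N ⟨le_rfl, fun K hK hKN => by rwa [inf_eq_left.2 hK] at hKN⟩
  exact ⟨P, hP⟩

lemma Maximal.closedSub {N P : Submodule A M} (hP : Maximal (EssentialIn N) P) : ClosedSub P :=
  fun _ hPQ => hP.eq_of_le (hP.prop.trans hPQ) hPQ.1

lemma exists_maximal_inf_eq_bot (N : Submodule A M) :
    ∃ K : Submodule A M, Maximal (fun K => K ⊓ N = ⊥) K :=
  zorn_le₀ {K : Submodule A M | K ⊓ N = ⊥} fun c hc hchain =>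
    ⟨sSup c, disjoint_iff.1 <| hchain.directedOn.disjoint_sSup_left.2 fun _ hb =>
      disjoint_iff.2 (hc hb), fun _ => le_sSup⟩

lemma Maximal.essentialSub_range_mkQ_comp_subtype {N K : Submodule A M}
    (hK : Maximal (fun K => K ⊓ N = ⊥) K) :
    EssentialSub (LinearMap.range (K.mkQ ∘ₗ N.subtype)) := by
  intro L hL
  have hcomap : L.comap K.mkQ = K := by
    refine hK.eq_of_ge ((Submodule.eq_bot_iff _).2 fun x ⟨hxL, hxN⟩ => ?_) fun x hx => ?_
    · have hqx : K.mkQ x ∈ L ⊓ LinearMap.range (K.mkQ ∘ₗ N.subtype) := ⟨hxL, ⟨x, hxN⟩, rfl⟩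
      rw [hL, Submodule.mem_bot, Submodule.mkQ_apply, Submodule.Quotient.mk_eq_zero] at hqx
      have hxKN : x ∈ K ⊓ N := ⟨hqx, hxN⟩
      rwa [hK.prop] at hxKN
    · simp [(Submodule.Quotient.mk_eq_zero K).2 hx]
  rw [← Submodule.map_comap_eq_of_surjective K.mkQ_surjective L, hcomap, Submodule.mkQ_map_self]

end Essential

section Injective

variable {A : Type*} [Ring A] {E : Type*} [AddCommGroup E] [Module A E] [Module.Injective A E]

/- With `K` a maximal complement of `N`, the submodule `N` embeds essentially into `E ⧸ K`; an
extension `θ : E ⧸ K → E` of the inverse embedding is injective with `N` essential in its range,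
so closedness forces `N = range θ`, and `θ ∘ mkQ` is the projection. -/
lemma ClosedSub.exists_isIdempotentElem {N : Submodule A E} (hN : ClosedSub N) :
    ∃ π : Module.End A E, IsIdempotentElem π ∧ LinearMap.range π = N ∧ ∀ x ∈ N, π x = x := by
  obtain ⟨K, hK⟩ := exists_maximal_inf_eq_bot N
  have hinj : Function.Injective (K.mkQ ∘ₗ N.subtype) := by
    intro x y hxy
    have hxy' : (x - y : E) ∈ K ⊓ N := ⟨(Submodule.Quotient.eq K).1 hxy, N.sub_mem x.2 y.2⟩
    rw [hK.prop, Submodule.mem_bot, sub_eq_zero] at hxy'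
    exact Subtype.ext hxy'
  obtain ⟨θ, hθ⟩ := Module.Injective.out (K.mkQ ∘ₗ N.subtype) hinj N.subtype
  have hθinj : Function.Injective θ := by
    rw [← LinearMap.ker_eq_bot]
    refine hK.essentialSub_range_mkQ_comp_subtype _ ((Submodule.eq_bot_iff _).2 ?_)
    rintro _ ⟨hy, x, rfl⟩
    simp only [SetLike.mem_coe, LinearMap.mem_ker, hθ, Submodule.subtype_apply] at hy
    simp [hy]
  have hNθ : N = LinearMap.range θ := by
    refine hN _ ?_
    have hess := hK.essentialSub_range_mkQ_comp_subtype.essentialIn_map hθinj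
    rwa [← LinearMap.range_comp, show θ ∘ₗ K.mkQ ∘ₗ N.subtype = N.subtype from LinearMap.ext hθ,
      Submodule.range_subtype] at hess
  have hπN : ∀ x ∈ N, θ (K.mkQ x) = x := fun x hx => hθ ⟨x, hx⟩
  refine ⟨θ ∘ₗ K.mkQ, LinearMap.ext fun x => hπN _ (hNθ ▸ ⟨_, rfl⟩), ?_, hπN⟩
  rw [LinearMap.range_comp_of_range_eq_top _ (Submodule.range_mkQ K), ← hNθ]

lemma ClosedSub.injective {N : Submodule A E} (hN : ClosedSub N) : Module.Injective A N := by
  obtain ⟨π, -, hrange, hπ⟩ := hN.exists_isIdempotentElem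
  refine ⟨fun X Y _ _ _ _ f hf g => ?_⟩
  obtain ⟨h, hh⟩ := Module.Injective.out f hf (N.subtype ∘ₗ g)
  refine ⟨(π ∘ₗ h).codRestrict N fun y => hrange ▸ ⟨h y, rfl⟩, fun x => Subtype.ext ?_⟩
  simp [hh, hπ _ (g x).2]

theorem exists_isInjectiveHull_submodule {M : Type*} [AddCommGroup M] [Module A M]
    {j : M →ₗ[A] E} (hj : Function.Injective j) :
    ∃ (C : Submodule A E) (i : M →ₗ[A] C), IsInjectiveHull i := by
  obtain ⟨C, hC⟩ := exists_maximal_essentialIn (LinearMap.range j)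
  have hjC : ∀ m, j m ∈ C := fun m => hC.prop.1 ⟨m, rfl⟩
  refine ⟨C, j.codRestrict C hjC, ⟨fun a b hab => hj (congrArg Subtype.val hab),
    hC.closedSub.injective, ?_⟩⟩
  rw [LinearMap.range_codRestrict]
  exact hC.prop.essentialSub_comap C.subtype fun x => x.2

end Injective

theorem exists_isInjectiveHull (A : Type u) [Ring A] (M : Type v) [AddCommGroup M] [Module A M]
    [Small.{v} A] :
    ∃ (C : Type v) (_ : AddCommGroup C) (_ : Module A C) (i : M →ₗ[A] C), IsInjectiveHull i := by
  let E : ModuleCat.{v} A := CategoryTheory.Injective.under (ModuleCat.of A M)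
  let ι : ModuleCat.of A M ⟶ E := CategoryTheory.Injective.ι (ModuleCat.of A M)
  have : Module.Injective A E := Module.injective_module_of_injective_object A E
    (inj := CategoryTheory.Injective.injective_under _)
  obtain ⟨C, i, hi⟩ :=
    exists_isInjectiveHull_submodule ((ModuleCat.mono_iff_injective ι).1 inferInstance)
  exact ⟨C, _, _, i, hi⟩

section Singular

variable (A : Type*) [Ring A] (M : Type*) [AddCommGroup M] [Module A M]

def singularSubmodule : Submodule A M where
  carrier := {m | EssentialSub (LinearMap.ker (LinearMap.toSpanSingleton A M m))}
  zero_mem' := fun K hK => by simpa using hK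
  add_mem' {x y} hx hy := (EssentialSub.inf hx hy).mono fun a ⟨hax, hay⟩ => by
    simp_all [smul_add]
  smul_mem' c x hx := (hx.essentialIn_top.essentialSub_comap (LinearMap.toSpanSingleton A A c)
    fun _ => trivial).mono fun a ha => by simpa [mul_smul] using ha

variable {A M} {M' : Type*} [AddCommGroup M'] [Module A M']

lemma mem_singularSubmodule {m : M} :
    m ∈ singularSubmodule A M ↔ EssentialSub (LinearMap.ker (LinearMap.toSpanSingleton A M m)) :=
  Iff.rfl

lemma map_mem_singularSubmodule (f : M →ₗ[A] M') {m : M} (hm : m ∈ singularSubmodule A M) :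
    f m ∈ singularSubmodule A M' :=
  hm.mono fun a ha => by simp_all [← map_smul]

lemma map_mem_singularSubmodule_iff {f : M →ₗ[A] M'} (hf : Function.Injective f) {m : M} :
    f m ∈ singularSubmodule A M' ↔ m ∈ singularSubmodule A M := by
  rw [mem_singularSubmodule, mem_singularSubmodule, ← LinearMap.comp_toSpanSingleton,
    LinearMap.ker_comp_of_ker_eq_bot _ (LinearMap.ker_eq_bot.2 hf)]

lemma NonsingularMod.of_essentialSub_range {f : M →ₗ[A] M'} (hf : Function.Injective f)
    (hess : EssentialSub (LinearMap.range f)) (hM : NonsingularMod A M) :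
    NonsingularMod A M' := by
  intro e he
  by_contra he0
  obtain ⟨a, ⟨m, hm⟩, ha0⟩ := hess.essentialIn_top.exists_smul_mem trivial he0
  have hm' : f m ∈ singularSubmodule A M' := hm ▸ (singularSubmodule A M').smul_mem a he
  rw [← hm, hM m ((map_mem_singularSubmodule_iff hf).1 hm'), map_zero] at ha0
  exact ha0 rfl

lemma NonsingularMod.le_ker_of_essentialIn (hM' : NonsingularMod A M') {F : M →ₗ[A] M'}
    {N P : Submodule A M} (hNP : EssentialIn N P) (hN : N ≤ LinearMap.ker F) :
    P ≤ LinearMap.ker F := fun x hx =>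
  hM' (F x) <| (hNP.essentialSub_comap (LinearMap.toSpanSingleton A M x)
    fun a => P.smul_mem a hx).mono fun a ha => by simpa using hN ha

lemma NonsingularMod.closedSub_ker (hM' : NonsingularMod A M') (F : M →ₗ[A] M') :
    ClosedSub (LinearMap.ker F) :=
  fun _ hP => le_antisymm hP.1 (hM'.le_ker_of_essentialIn hP le_rfl)

lemma NonsingularMod.ext_of_essentialSub (hM' : NonsingularMod A M') {F G : M →ₗ[A] M'}
    {N : Submodule A M} (hN : EssentialSub N) (h : ∀ x ∈ N, F x = G x) : F = G :=
  sub_eq_zero.1 <| LinearMap.ker_eq_top.1 <| top_le_iff.1 <|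
    hM'.le_ker_of_essentialIn hN.essentialIn_top fun x hx => by simp [h x hx]

lemma NonsingularMod.isUnit_of_ne_zero [Module.Injective A M] (hM : NonsingularMod A M)
    (hidem : ∀ p : Module.End A M, IsIdempotentElem p → p = 0 ∨ p = 1)
    {F : Module.End A M} (hF : F ≠ 0) : IsUnit F := by
  have hker : LinearMap.ker F = ⊥ := by
    obtain ⟨π, hπ, hrange, -⟩ := (hM.closedSub_ker F).exists_isIdempotentElem
    rcases hidem π hπ with rfl | rfl
    · rwa [LinearMap.range_zero, eq_comm] at hrange
    · refine absurd (LinearMap.ker_eq_top.1 ?_) hF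
      rw [← hrange, Module.End.one_eq_id, LinearMap.range_id]
  obtain ⟨G, hG⟩ := Module.Injective.out F (LinearMap.ker_eq_bot.1 hker) LinearMap.id
  have hGF : G * F = 1 := LinearMap.ext hG
  rcases hidem (F * G) (by rw [IsIdempotentElem, mul_assoc, ← mul_assoc G, hGF, one_mul]) with
    h | h
  · exact absurd (by rw [← mul_one F, ← hGF, ← mul_assoc, h, zero_mul]) hF
  · exact ⟨⟨F, G, h, hGF⟩, rfl⟩

end Singular

section Peirce

variable {S : Type*} [Ring S] {e : S}

lemma IsIdempotentElem.mul_mul_one_sub_mul_self_eq_zero (he : IsIdempotentElem e) (a : S) :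
    e * a * (1 - e) * (e * a * (1 - e)) = 0 := by
  have h : e * a * (1 - e) * (e * a * (1 - e)) = e * a * ((1 - e) * e) * a * (1 - e) := by
    noncomm_ring
  rw [h, he.one_sub_mul_self]
  simp

lemma IsIdempotentElem.one_sub_mul_mul_mul_self_eq_zero (he : IsIdempotentElem e) (a : S) :
    (1 - e) * a * e * ((1 - e) * a * e) = 0 := by
  simpa using he.one_sub.mul_mul_one_sub_mul_self_eq_zero a

variable [IsSimpleRing S] {T : Subring S}

lemma Subring.mul_mul_mem_of_mul_self_eq_zero_mem (hT : ∀ x : S, x * x = 0 → x ∈ T)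
    (he : IsIdempotentElem e) (he1 : e ≠ 1) (x : S) : e * x * e ∈ T := by
  let J : TwoSidedIdeal S := .mk' {y | ∀ p q, e * p * y * q * e ∈ T} (by simp)
    (fun hy hz p q => by simpa [mul_add, add_mul] using T.add_mem (hy p q) (hz p q))
    (fun hy p q => by simpa using T.neg_mem (hy p q))
    (fun {y _} hz p q => by simpa [mul_assoc] using hz (p * y) q)
    (fun {_ z} hy p q => by simpa [mul_assoc] using hy p (z * q))
  have hf : 1 - e ∈ J := (TwoSidedIdeal.mem_mk' ..).2 fun p q => by
    have hsplit : e * p * (1 - e) * q * e = e * p * (1 - e) * ((1 - e) * q * e) := by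
      simp only [← mul_assoc]
      rw [mul_assoc (e * p) (1 - e) (1 - e), he.one_sub.eq]
    rw [hsplit]
    exact T.mul_mem (hT _ (he.mul_mul_one_sub_mul_self_eq_zero p))
      (hT _ (he.one_sub_mul_mul_mul_self_eq_zero q))
  have h1 := (TwoSidedIdeal.mem_mk' ..).1 <|
    IsSimpleRing.one_mem_of_ne_zero_mem J (sub_ne_zero.2 he1.symm) hf
  simpa using h1 x 1

lemma Subring.eq_top_of_mul_self_eq_zero_mem (hT : ∀ x : S, x * x = 0 → x ∈ T)
    (he : IsIdempotentElem e) (he0 : e ≠ 0) (he1 : e ≠ 1) : T = ⊤ := by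
  refine eq_top_iff.2 fun x _ => ?_
  have hpeirce : x = e * x * e + e * x * (1 - e) + ((1 - e) * x * e + (1 - e) * x * (1 - e)) := by
    noncomm_ring
  rw [hpeirce]
  exact T.add_mem
    (T.add_mem (mul_mul_mem_of_mul_self_eq_zero_mem hT he he1 x)
      (hT _ (he.mul_mul_one_sub_mul_self_eq_zero x)))
    (T.add_mem (hT _ (he.one_sub_mul_mul_mul_self_eq_zero x))
      (mul_mul_mem_of_mul_self_eq_zero_mem hT he.one_sub (by simpa using he0) x))

end Peirce

section Invariant

variable {A : Type*} [Ring A] {M C : Type*} [AddCommGroup M] [Module A M] [AddCommGroup C]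
  [Module A C]

def invariantSubring (i : M →ₗ[A] C) : Subring (Module.End A C) where
  carrier := {F | ∀ m, F (i m) ∈ LinearMap.range i}
  zero_mem' _ := ⟨0, by simp⟩
  one_mem' m := ⟨m, rfl⟩
  add_mem' {F G} hF hG m := by
    obtain ⟨a, ha⟩ := hF m
    obtain ⟨b, hb⟩ := hG m
    exact ⟨a + b, by simp [ha, hb]⟩
  neg_mem' {F} hF m := by
    obtain ⟨a, ha⟩ := hF m
    exact ⟨-a, by simp [ha]⟩
  mul_mem' {F G} hF hG m := by
    obtain ⟨a, ha⟩ := hG m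
    simpa [← ha] using hF a

variable {i : M →ₗ[A] C}

lemma HullAutInv.mem_invariantSubring (hinv : HullAutInv i) {F : Module.End A C} (hF : IsUnit F) :
    F ∈ invariantSubring i := by
  obtain ⟨u, rfl⟩ := hF
  exact hinv (LinearMap.GeneralLinearGroup.generalLinearEquiv A C u)

lemma HullAutInv.mem_invariantSubring_of_mul_self_eq_zero (hinv : HullAutInv i)
    {x : Module.End A C} (hx : x * x = 0) : x ∈ invariantSubring i := by
  have hunit : IsUnit (1 + x) := IsNilpotent.isUnit_one_add ⟨2, by rw [pow_two, hx]⟩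
  simpa using (invariantSubring i).sub_mem (hinv.mem_invariantSubring hunit)
    (invariantSubring i).one_mem

end Invariant

section RightRegular

open MulOpposite

variable {R : Type u} [Ring R]

lemma map_eq_op_smul_map_one {C : Type*} [AddCommGroup C] [Module Rᵐᵒᵖ C] (i : R →ₗ[Rᵐᵒᵖ] C)
    (m : R) : i m = op m • i 1 := by
  rw [← map_smul, op_smul_eq_mul, one_mul]

lemma baer_of_invariantSubring_eq_top {C : Type u} [AddCommGroup C] [Module Rᵐᵒᵖ C]
    [Module.Injective Rᵐᵒᵖ C] {i : R →ₗ[Rᵐᵒᵖ] C} (hi : Function.Injective i)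
    (htop : invariantSubring i = ⊤) : Module.Baer Rᵐᵒᵖ R := by
  intro I g
  obtain ⟨h, hh⟩ := Module.Injective.out I.subtype I.injective_subtype (i ∘ₗ g)
  obtain ⟨F, hF⟩ := Module.Injective.out i hi (h ∘ₗ (opLinearEquiv Rᵐᵒᵖ).toLinearMap)
  obtain ⟨a, ha⟩ := (htop ▸ Subring.mem_top F : F ∈ invariantSubring i) 1
  refine ⟨LinearMap.toSpanSingleton Rᵐᵒᵖ R a, fun x hx => hi ?_⟩
  rw [LinearMap.toSpanSingleton_apply, map_smul, ha, hF]
  simpa [← map_smul] using hh ⟨x, hx⟩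

variable [IsSimpleRing R]

lemma nonsingularMod_of_isSimpleRing : NonsingularMod Rᵐᵒᵖ R := by
  let Z : TwoSidedIdeal R := .mk' (singularSubmodule Rᵐᵒᵖ R) (zero_mem _) add_mem neg_mem
    (fun {x _} hy => map_mem_singularSubmodule (DistribSMul.toLinearMap Rᵐᵒᵖ R x) hy)
    (fun {_ y} hx => by simpa using Submodule.smul_mem _ (op y) hx)
  have h1 : (1 : R) ∉ Z := fun h1 => by
    have hbot : LinearMap.ker (LinearMap.toSpanSingleton Rᵐᵒᵖ R 1) = ⊥ :=
      eq_bot_iff.2 fun a ha => by simpa using ha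
    have htop := (TwoSidedIdeal.mem_mk' ..).1 h1 ⊤ (by rw [hbot, inf_bot_eq])
    exact top_ne_bot htop
  exact fun x hx => by_contra fun hx0 =>
    h1 (IsSimpleRing.one_mem_of_ne_zero_mem Z hx0 ((TwoSidedIdeal.mem_mk' ..).2 hx))

end RightRegular

namespace IsInjectiveHull

variable {R : Type u} [Ring R] {C : Type u} [AddCommGroup C] [Module Rᵐᵒᵖ C]
  {i : R →ₗ[Rᵐᵒᵖ] C} (hull : IsInjectiveHull i)
include hull

noncomputable def leftMulEnd (a : R) : Module.End Rᵐᵒᵖ C :=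
  (hull.injE.out i hull.inj (i ∘ₗ DistribSMul.toLinearMap Rᵐᵒᵖ R a)).choose

lemma leftMulEnd_apply (a m : R) : hull.leftMulEnd a (i m) = i (a * m) :=
  (hull.injE.out i hull.inj (i ∘ₗ DistribSMul.toLinearMap Rᵐᵒᵖ R a)).choose_spec m

variable [IsSimpleRing R]

lemma nonsingularMod : NonsingularMod Rᵐᵒᵖ C :=
  nonsingularMod_of_isSimpleRing.of_essentialSub_range hull.inj hull.ess

lemma end_ext {F G : Module.End Rᵐᵒᵖ C} (h : F (i 1) = G (i 1)) : F = G := by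
  refine hull.nonsingularMod.ext_of_essentialSub hull.ess ?_
  rintro _ ⟨m, rfl⟩
  rw [map_eq_op_smul_map_one i m, map_smul, map_smul, h]

noncomputable def leftMul : R →+* Module.End Rᵐᵒᵖ C where
  toFun := hull.leftMulEnd
  map_one' := hull.end_ext <| by simp [leftMulEnd_apply]
  map_mul' a b := hull.end_ext <| by simp [leftMulEnd_apply]
  map_zero' := hull.end_ext <| by simp [leftMulEnd_apply]
  map_add' a b := hull.end_ext <| by simp [leftMulEnd_apply]

lemma isSimpleRing_end : IsSimpleRing (Module.End Rᵐᵒᵖ C) := by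
  have : Nontrivial C := hull.inj.nontrivial
  refine .of_eq_bot_or_eq_top fun J => or_iff_not_imp_left.2 fun hJ => ?_
  obtain ⟨g, hgJ, hg0⟩ := SetLike.exists_of_lt (bot_lt_iff_ne_bot.2 hJ)
  have hg1 : g (i 1) ≠ 0 := fun h => hg0 (hull.end_ext (by simpa using h))
  obtain ⟨a, ⟨b, hb⟩, hab⟩ := hull.ess.essentialIn_top.exists_smul_mem trivial hg1
  have hb0 : b ≠ 0 := by
    rintro rfl
    exact hab (by rw [← hb, map_zero])
  have hgb : hull.leftMul b = g * hull.leftMul a.unop := hull.end_ext <| by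
    simp [leftMul, leftMulEnd_apply, hb, map_eq_op_smul_map_one i a.unop]
  have h1 : (1 : R) ∈ J.comap hull.leftMul := IsSimpleRing.one_mem_of_ne_zero_mem _ hb0 <|
    (TwoSidedIdeal.mem_comap _).2 (hgb ▸ J.mul_mem_right _ _ hgJ)
  rwa [TwoSidedIdeal.mem_comap _, map_one, TwoSidedIdeal.one_mem_iff] at h1

lemma invariantSubring_eq_top (hinv : HullAutInv i) : invariantSubring i = ⊤ := by
  have := hull.isSimpleRing_end
  by_cases hidem : ∃ e : Module.End Rᵐᵒᵖ C, IsIdempotentElem e ∧ e ≠ 0 ∧ e ≠ 1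
  · obtain ⟨e, he, he0, he1⟩ := hidem
    exact Subring.eq_top_of_mul_self_eq_zero_mem
      (fun _ => hinv.mem_invariantSubring_of_mul_self_eq_zero) he he0 he1
  · push Not at hidem
    have := hull.injE
    refine eq_top_iff.2 fun F _ => ?_
    rcases eq_or_ne F 0 with rfl | hF
    · exact zero_mem _
    · exact hinv.mem_invariantSubring <| hull.nonsingularMod.isUnit_of_ne_zero
        (fun p hp => or_iff_not_imp_left.2 (hidem p hp)) hF

end IsInjectiveHull

/-- a simple right automorphism-invariant ring is right self-injective. -/
theorem simple_autInvariant_selfInjective {R : Type u} [Ring R]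
    (hsimple : IsSimpleRing R)
    (hinv : AutInvariant Rᵐᵒᵖ R) :
    Module.Injective Rᵐᵒᵖ R := by
  obtain ⟨C, _, _, i, hull⟩ := exists_isInjectiveHull Rᵐᵒᵖ R
  have := hull.injE
  exact (baer_of_invariantSubring_eq_top hull.inj
    (hull.invariantSubring_eq_top (hinv C i hull))).injective
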